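/- arXiv:1208.4867 — 5 statements merged into one kernel-verified Lean document; each statement's English description precedes it below -/
import Mathlib

section
/- Suppose the Middle algorithm is correct on the directed graph G(V,E) tolerating up to f Byzantine faults. Then both of the following hold: (a) every node v ∈ V satisfies |N_v^-| ≥ 3f; and (b) for every partition of V into sets F, L, C, R such that L and R are nonempty and |F| ≤ f, either C ∪ R ⇒ L or L ∪ C ⇒ R. -/
open Finset Filter

variable {V : Type} [Fintype V] [DecidableEq V]

/-- Incoming neighbors of node `v` in the directed graph with edge set `E`. -/
def NinSet (E : Finset (V × V)) (v : V) : Finset V :=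
  Finset.univ.filter (fun u => (u, v) ∈ E)

/-- `A ⇒ B`: there is a node in `B` with more than 1/3 of its incoming neighbors in `A`. -/
def ImpRel (E : Finset (V × V)) (A B : Finset V) : Prop :=
  ∃ v ∈ B, (NinSet E v).card < 3 * ((NinSet E v) ∩ A).card

/-- `in(A ⇒ B)`: the set of nodes in `B` with more than 1/3 of incoming neighbors in `A`. -/
def inRel (E : Finset (V × V)) (A B : Finset V) : Finset V :=
  B.filter (fun v => (NinSet E v).card < 3 * ((NinSet E v) ∩ A).card)

/-- `A` propagates to `B` in `l` steps. -/
def PropagatesIn (E : Finset (V × V)) (A B : Finset V) (l : ℕ) : Prop :=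
  0 < l ∧ ∃ As Bs : ℕ → Finset V,
    As 0 = A ∧ Bs 0 = B ∧ As l = A ∪ B ∧ Bs l = ∅ ∧
    (∀ τ < l, Bs τ ≠ ∅) ∧
    (∀ τ < l, ImpRel E (As τ) (Bs τ) ∧
      As (τ + 1) = As τ ∪ inRel E (As τ) (Bs τ) ∧
      Bs (τ + 1) = Bs τ \ inRel E (As τ) (Bs τ))

/-- `A` propagates to `B` (in some number of steps). -/
def Propagates (E : Finset (V × V)) (A B : Finset V) : Prop :=
  ∃ l, PropagatesIn E A B l

/-- The sufficient condition for parameter `f`. -/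
def SuffCond (E : Finset (V × V)) (f : ℕ) : Prop :=
  (∀ v : V, 3 * f ≤ (NinSet E v).card) ∧
  (∀ F L C R : Finset V,
    F ∪ L ∪ C ∪ R = Finset.univ →
    Disjoint F L → Disjoint F C → Disjoint F R →
    Disjoint L C → Disjoint L R → Disjoint C R →
    L.Nonempty → R.Nonempty → F.card ≤ f →
    ImpRel E (C ∪ R) L ∨ ImpRel E (L ∪ C) R)

/-- The weight `a_i = 1/(|N_i^-| - 2⌊|N_i^-|/3⌋ + 1)` used in the Middle algorithm. -/
noncomputable def middleWeight (E : Finset (V × V)) (i : V) : ℝ :=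
  (((NinSet E i).card - 2 * ((NinSet E i).card / 3) + 1 : ℕ) : ℝ)⁻¹

/-- `α = min_{i ∈ V} a_i`. -/
noncomputable def alphaMin (E : Finset (V × V)) : ℝ :=
  ⨅ i : V, middleWeight E i

/-- An execution of the Middle algorithm on graph `E` with faulty set `F`. -/
structure MiddleExec (E : Finset (V × V)) (F : Finset V) where
  /-- `state i t` is the state `v_i[t]` (meaningful for fault-free `i`). -/
  state : V → ℕ → ℝ
  /-- `w t i j` is the value node `i` receives from `j ∈ N_i^-` in iteration `t ≥ 1`. -/
  w : ℕ → V → V → ℝ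
  /-- the set `B` at node `i` in iteration `t`. -/
  Bs : ℕ → V → Finset V
  /-- the set `T` at node `i` in iteration `t`. -/
  Ts : ℕ → V → Finset V
  /-- the set `M` at node `i` in iteration `t`. -/
  Ms : ℕ → V → Finset V
  w_honest : ∀ t, 1 ≤ t → ∀ i, i ∉ F → ∀ j ∈ NinSet E i, j ∉ F →
    w t i j = state j (t - 1)
  part_union : ∀ t, 1 ≤ t → ∀ i, i ∉ F → Bs t i ∪ Ts t i ∪ Ms t i = NinSet E i
  disj_BT : ∀ t, 1 ≤ t → ∀ i, i ∉ F → Disjoint (Bs t i) (Ts t i)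
  disj_BM : ∀ t, 1 ≤ t → ∀ i, i ∉ F → Disjoint (Bs t i) (Ms t i)
  disj_TM : ∀ t, 1 ≤ t → ∀ i, i ∉ F → Disjoint (Ts t i) (Ms t i)
  card_B : ∀ t, 1 ≤ t → ∀ i, i ∉ F → (Bs t i).card = (NinSet E i).card / 3
  card_T : ∀ t, 1 ≤ t → ∀ i, i ∉ F → (Ts t i).card = (NinSet E i).card / 3
  le_BM : ∀ t, 1 ≤ t → ∀ i, i ∉ F → ∀ j ∈ Bs t i, ∀ k ∈ Ms t i, w t i j ≤ w t i k
  le_MT : ∀ t, 1 ≤ t → ∀ i, i ∉ F → ∀ j ∈ Ms t i, ∀ k ∈ Ts t i, w t i j ≤ w t i k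
  update : ∀ t, 1 ≤ t → ∀ i, i ∉ F →
    state i t = middleWeight E i * (state i (t - 1) + ∑ j ∈ Ms t i, w t i j)

/-- `U[t]`: the maximum state among fault-free nodes at the end of iteration `t`. -/
noncomputable def Umax {E : Finset (V × V)} {F : Finset V}
    (exec : MiddleExec E F) (t : ℕ) : ℝ :=
  ⨆ i : {i : V // i ∉ F}, exec.state i.1 t

/-- `μ[t]`: the minimum state among fault-free nodes at the end of iteration `t`. -/
noncomputable def muMin {E : Finset (V × V)} {F : Finset V}
    (exec : MiddleExec E F) (t : ℕ) : ℝ :=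
  ⨅ i : {i : V // i ∉ F}, exec.state i.1 t

/-- The Middle algorithm is correct on `E` tolerating `f` Byzantine faults:
for every faulty set `F` with `|F| ≤ f` and every execution, validity and convergence hold. -/
def MiddleCorrect (E : Finset (V × V)) (f : ℕ) : Prop :=
  ∀ F : Finset V, F.card ≤ f → ∀ exec : MiddleExec E F,
    (∀ t : ℕ, 1 ≤ t → muMin exec (t - 1) ≤ muMin exec t ∧ Umax exec t ≤ Umax exec (t - 1)) ∧
    Filter.Tendsto (fun t => Umax exec t - muMin exec t) Filter.atTop (nhds 0)

/-!
If a node `v` has `0 < |N_v^-| < 3f`, make `min f |N_v^-|` of its in-neighbours faulty and let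
them send `1` while every fault-free node starts at `0`: more than `⌊|N_v^-|/3⌋` of the values
`v` receives are positive, so one survives the trimming and the state of `v` becomes positive,
which breaks validity. If a partition `F, L, C, R` violates (b), start `R` at `1` and the rest
at `0`, and let the faulty nodes send `0` to `L` and `1` to `R`: each node of `L` receives at
most `⌊|N^-|/3⌋` positive values, all of which are trimmed, so `L` stays at `0`; symmetrically
`R` stays at `1`, and `U - μ ≥ 1` forever. A node `v` without in-neighbours when `f ≥ 1` is the
instance `L = V \ {v}`, `R = {v}` of (b), because by the first case every node that hears
from `v` has at least three in-neighbours.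
-/

section Trim

variable {ι α : Type*} [DecidableEq ι] [LinearOrder α]

theorem exists_bottom_subset_card_eq (g : ι → α) (s : Finset ι) :
    ∀ k ≤ #s, ∃ B ⊆ s, #B = k ∧ ∀ x ∈ B, ∀ y ∈ s \ B, g x ≤ g y := by
  intro k
  induction k with
  | zero => exact fun _ => ⟨∅, empty_subset s, rfl, by simp⟩
  | succ k ih =>
    intro hk
    obtain ⟨B, hBs, hBk, hB⟩ := ih (by omega)
    obtain ⟨m, hm, hmin⟩ := (s \ B).exists_min_image g
      (by rw [← card_pos, card_sdiff_of_subset hBs]; omega)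
    refine ⟨insert m B, insert_subset (mem_sdiff.1 hm).1 hBs,
      by rw [card_insert_of_notMem (mem_sdiff.1 hm).2, hBk], fun x hx y hy => ?_⟩
    have hy' : y ∈ s \ B := sdiff_subset_sdiff subset_rfl (subset_insert m B) hy
    rcases mem_insert.1 hx with rfl | hx
    · exact hmin y hy'
    · exact hB x hx y hy'

structure IsTrim (g : ι → α) (s : Finset ι) (k : ℕ) (B T M : Finset ι) : Prop where
  union : B ∪ T ∪ M = s
  disj_BT : Disjoint B T
  disj_BM : Disjoint B M
  disj_TM : Disjoint T M
  card_B : #B = k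
  card_T : #T = k
  le_BM : ∀ j ∈ B, ∀ m ∈ M, g j ≤ g m
  le_MT : ∀ m ∈ M, ∀ j ∈ T, g m ≤ g j

theorem exists_isTrim (g : ι → α) (s : Finset ι) (k : ℕ) (hk : 2 * k ≤ #s) :
    ∃ p : Finset ι × Finset ι × Finset ι, IsTrim g s k p.1 p.2.1 p.2.2 := by
  obtain ⟨B, hBs, hBk, hB⟩ := exists_bottom_subset_card_eq g s k (by omega)
  obtain ⟨T, hTs, hTk, hT⟩ := exists_bottom_subset_card_eq (OrderDual.toDual ∘ g) (s \ B) k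
    (by rw [card_sdiff_of_subset hBs]; omega)
  refine ⟨⟨B, T, (s \ B) \ T⟩, ?_, disjoint_of_subset_right hTs disjoint_sdiff,
    disjoint_of_subset_right sdiff_subset disjoint_sdiff, disjoint_sdiff, hBk, hTk,
    fun j hj m hm => hB j hj m (mem_sdiff.1 hm).1, fun m hm j hj => hT j hj m hm⟩
  rw [union_assoc, union_sdiff_of_subset hTs, union_sdiff_of_subset hBs]

noncomputable def trimChoice (g : ι → α) (s : Finset ι) : Finset ι × Finset ι × Finset ι :=
  (exists_isTrim g s (#s / 3) (by omega)).choose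

theorem isTrim_trimChoice (g : ι → α) (s : Finset ι) :
    IsTrim g s (#s / 3) (trimChoice g s).1 (trimChoice g s).2.1 (trimChoice g s).2.2 :=
  (exists_isTrim g s (#s / 3) (by omega)).choose_spec

namespace IsTrim

variable {g : ι → α} {s : Finset ι} {k : ℕ} {B T M : Finset ι}

theorem top_subset (h : IsTrim g s k B T M) : T ⊆ s :=
  h.union ▸ subset_union_right.trans subset_union_left

theorem middle_subset (h : IsTrim g s k B T M) : M ⊆ s :=
  h.union ▸ subset_union_right

theorem card_middle (h : IsTrim g s k B T M) : #M = #s - 2 * k := by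
  rw [← h.union, card_union_of_disjoint (disjoint_union_left.2 ⟨h.disj_BM, h.disj_TM⟩),
    card_union_of_disjoint h.disj_BT, h.card_B, h.card_T]
  omega

theorem middle_le (h : IsTrim g s k B T M) {c : α} (hc : #{j ∈ s | c < g j} ≤ k) :
    ∀ m ∈ M, g m ≤ c := by
  intro m hm
  by_contra! hlt
  have hsub : insert m T ⊆ {j ∈ s | c < g j} := by
    intro j hj
    rcases mem_insert.1 hj with rfl | hj
    · exact mem_filter.2 ⟨h.middle_subset hm, hlt⟩
    · exact mem_filter.2 ⟨h.top_subset hj, hlt.trans_le (h.le_MT m hm j hj)⟩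
  have := card_le_card hsub
  rw [card_insert_of_notMem (disjoint_right.1 h.disj_TM hm), h.card_T] at this
  omega

theorem exists_middle_lt (h : IsTrim g s k B T M) (hM : M.Nonempty) {c : α}
    (hc : k < #{j ∈ s | c < g j}) : ∃ m ∈ M, c < g m := by
  obtain ⟨p, hp, hpT⟩ := not_subset.1 fun hsub => (card_le_card hsub).trans_eq h.card_T |>.not_gt hc
  obtain ⟨hps, hcp⟩ := mem_filter.1 hp
  rw [← h.union, mem_union, mem_union] at hps
  rcases hps with (hpB | hpT') | hpM
  · obtain ⟨m, hm⟩ := hM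
    exact ⟨m, hm, hcp.trans_le (h.le_BM p hpB m hm)⟩
  · exact absurd hpT' hpT
  · exact ⟨p, hpM, hcp⟩

end IsTrim

end Trim

theorem middleWeight_pos (E : Finset (V × V)) (i : V) : 0 < middleWeight E i := by
  unfold middleWeight
  positivity

theorem middleWeight_mul_le {E : Finset (V × V)} {i : V} {M : Finset V}
    (hM : #M = #(NinSet E i) - 2 * (#(NinSet E i) / 3)) {x c : ℝ} {y : V → ℝ}
    (hx : x ≤ c) (hy : ∀ j ∈ M, y j ≤ c) :
    middleWeight E i * (x + ∑ j ∈ M, y j) ≤ c := by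
  have hsum : ∑ j ∈ M, y j ≤ #M * c := by simpa using sum_le_sum hy
  rw [middleWeight, ← hM, inv_mul_le_iff₀ (by positivity)]
  push_cast
  linarith

namespace MiddleExec

variable {E : Finset (V × V)} {F : Finset V}

def neg (exec : MiddleExec E F) : MiddleExec E F where
  state i t := -exec.state i t
  w t i j := -exec.w t i j
  Bs := exec.Ts
  Ts := exec.Bs
  Ms := exec.Ms
  w_honest t ht i hi j hj hjF := by rw [exec.w_honest t ht i hi j hj hjF]
  part_union t ht i hi := by rw [union_comm (exec.Ts t i), exec.part_union t ht i hi]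
  disj_BT t ht i hi := (exec.disj_BT t ht i hi).symm
  disj_BM := exec.disj_TM
  disj_TM := exec.disj_BM
  card_B := exec.card_T
  card_T := exec.card_B
  le_BM t ht i hi j hj m hm := neg_le_neg (exec.le_MT t ht i hi m hm j hj)
  le_MT t ht i hi m hm j hj := neg_le_neg (exec.le_BM t ht i hi j hj m hm)
  update t ht i hi := by
    rw [exec.update t ht i hi, sum_neg_distrib]
    ring

theorem isTrim (exec : MiddleExec E F) {t : ℕ} (ht : 1 ≤ t) {i : V} (hi : i ∉ F) :
    IsTrim (exec.w t i) (NinSet E i) (#(NinSet E i) / 3)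
      (exec.Bs t i) (exec.Ts t i) (exec.Ms t i) :=
  ⟨exec.part_union t ht i hi, exec.disj_BT t ht i hi, exec.disj_BM t ht i hi,
    exec.disj_TM t ht i hi, exec.card_B t ht i hi, exec.card_T t ht i hi,
    exec.le_BM t ht i hi, exec.le_MT t ht i hi⟩

theorem state_succ_le (exec : MiddleExec E F) {t : ℕ} {i : V} (hi : i ∉ F) {c : ℝ}
    (hprev : exec.state i t ≤ c)
    (hc : #{j ∈ NinSet E i | c < exec.w (t + 1) i j} ≤ #(NinSet E i) / 3) :
    exec.state i (t + 1) ≤ c := by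
  have h := exec.isTrim (Nat.le_add_left 1 t) hi
  rw [exec.update (t + 1) (by omega) i hi, Nat.add_sub_cancel]
  exact middleWeight_mul_le h.card_middle hprev (h.middle_le hc)

theorem state_succ_pos (exec : MiddleExec E F) {t : ℕ} {i : V} (hi : i ∉ F)
    (hprev : 0 ≤ exec.state i t) (hw : ∀ j ∈ NinSet E i, 0 ≤ exec.w (t + 1) i j)
    (hc : #(NinSet E i) / 3 < #{j ∈ NinSet E i | 0 < exec.w (t + 1) i j}) :
    0 < exec.state i (t + 1) := by
  have h := exec.isTrim (Nat.le_add_left 1 t) hi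
  have hM : (exec.Ms (t + 1) i).Nonempty := by
    have := card_filter_le (NinSet E i) (fun j => 0 < exec.w (t + 1) i j)
    rw [← card_pos, h.card_middle]
    omega
  obtain ⟨m, hm, hpos⟩ := h.exists_middle_lt hM hc
  have hsum := single_le_sum (fun j hj => hw j (h.middle_subset hj)) hm
  rw [exec.update (t + 1) (by omega) i hi, Nat.add_sub_cancel]
  exact mul_pos (middleWeight_pos E i) (by linarith)

theorem state_le_of_not_impRel (exec : MiddleExec E F) {S A : Finset V} {c : ℝ}
    (hSF : Disjoint F S) (hA : ∀ j ∉ F, j ∉ S → j ∈ A) (hAS : ¬ImpRel E A S)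
    (hF : ∀ t, ∀ i ∈ S, ∀ j ∈ F, exec.w (t + 1) i j ≤ c)
    (h0 : ∀ i ∈ S, exec.state i 0 ≤ c) :
    ∀ t, ∀ i ∈ S, exec.state i t ≤ c := by
  intro t
  induction t with
  | zero => exact h0
  | succ t ih =>
    intro i hi
    have hiF : i ∉ F := disjoint_right.1 hSF hi
    have hsub : {j ∈ NinSet E i | c < exec.w (t + 1) i j} ⊆ NinSet E i ∩ A := by
      intro j hj
      obtain ⟨hjN, hjc⟩ := mem_filter.1 hj
      have hjF : j ∉ F := fun hjF => (hF t i hi j hjF).not_gt hjc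
      have hjS : j ∉ S := fun hjS => by
        rw [exec.w_honest (t + 1) (by omega) i hiF j hjN hjF, Nat.add_sub_cancel] at hjc
        exact (ih j hjS).not_gt hjc
      exact mem_inter.2 ⟨hjN, hA j hjF hjS⟩
    have hfew : 3 * #(NinSet E i ∩ A) ≤ #(NinSet E i) := not_lt.1 fun hlt => hAS ⟨i, hi, hlt⟩
    exact exec.state_succ_le hiF (ih i hi) (by have := card_le_card hsub; omega)

theorem le_state_of_not_impRel (exec : MiddleExec E F) {S A : Finset V} {c : ℝ}
    (hSF : Disjoint F S) (hA : ∀ j ∉ F, j ∉ S → j ∈ A) (hAS : ¬ImpRel E A S)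
    (hF : ∀ t, ∀ i ∈ S, ∀ j ∈ F, c ≤ exec.w (t + 1) i j)
    (h0 : ∀ i ∈ S, c ≤ exec.state i 0) :
    ∀ t, ∀ i ∈ S, c ≤ exec.state i t := fun t i hi =>
  neg_le_neg_iff.1 <| exec.neg.state_le_of_not_impRel hSF hA hAS
    (fun t i hi j hj => neg_le_neg (hF t i hi j hj)) (fun i hi => neg_le_neg (h0 i hi)) t i hi

theorem state_le_Umax (exec : MiddleExec E F) (t : ℕ) {i : V} (hi : i ∉ F) :
    exec.state i t ≤ Umax exec t :=
  le_ciSup (f := fun i : {i // i ∉ F} => exec.state i.1 t) (Set.finite_range _).bddAbove ⟨i, hi⟩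

theorem muMin_le_state (exec : MiddleExec E F) (t : ℕ) {i : V} (hi : i ∉ F) :
    muMin exec t ≤ exec.state i t :=
  ciInf_le (f := fun i : {i // i ∉ F} => exec.state i.1 t) (Set.finite_range _).bddBelow ⟨i, hi⟩

theorem Umax_le (exec : MiddleExec E F) (t : ℕ) [Nonempty {i // i ∉ F}] {c : ℝ}
    (h : ∀ i ∉ F, exec.state i t ≤ c) : Umax exec t ≤ c :=
  ciSup_le fun i => h i.1 i.2

end MiddleExec

noncomputable def middleRun (E : Finset (V × V)) (F : Finset V) (fval init : V → ℝ) :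
    ℕ → V → ℝ
  | 0 => init
  | t + 1 => fun i =>
    let g : V → ℝ := fun j => if j ∈ F then fval i else middleRun E F fval init t j
    middleWeight E i * (middleRun E F fval init t i + ∑ j ∈ (trimChoice g (NinSet E i)).2.2, g j)

theorem exists_middleExec (E : Finset (V × V)) (F : Finset V) (fval init : V → ℝ) :
    ∃ exec : MiddleExec E F,
      (∀ i, exec.state i 0 = init i) ∧ ∀ t i, ∀ j ∈ F, exec.w (t + 1) i j = fval i := by
  let g (t : ℕ) (i j : V) : ℝ := if j ∈ F then fval i else middleRun E F fval init t j
  refine ⟨{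
    state := fun i t => middleRun E F fval init t i
    w := fun t => g (t - 1)
    Bs := fun t i => (trimChoice (g (t - 1) i) (NinSet E i)).1
    Ts := fun t i => (trimChoice (g (t - 1) i) (NinSet E i)).2.1
    Ms := fun t i => (trimChoice (g (t - 1) i) (NinSet E i)).2.2
    w_honest := fun _ _ _ _ _ _ hj => if_neg hj
    part_union := fun _ _ _ _ => (isTrim_trimChoice _ _).union
    disj_BT := fun _ _ _ _ => (isTrim_trimChoice _ _).disj_BT
    disj_BM := fun _ _ _ _ => (isTrim_trimChoice _ _).disj_BM
    disj_TM := fun _ _ _ _ => (isTrim_trimChoice _ _).disj_TM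
    card_B := fun _ _ _ _ => (isTrim_trimChoice _ _).card_B
    card_T := fun _ _ _ _ => (isTrim_trimChoice _ _).card_T
    le_BM := fun _ _ _ _ => (isTrim_trimChoice _ _).le_BM
    le_MT := fun _ _ _ _ => (isTrim_trimChoice _ _).le_MT
    update := ?_ }, fun _ => rfl, fun _ _ _ hj => if_pos hj⟩
  rintro (_ | t) ht i -
  · omega
  · rfl

theorem impRel_or_impRel_of_middleCorrect {E : Finset (V × V)} {f : ℕ}
    (hcorrect : MiddleCorrect E f) {F L C R : Finset V} (hcover : F ∪ L ∪ C ∪ R = univ)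
    (hFL : Disjoint F L) (hFR : Disjoint F R) (hLR : Disjoint L R)
    (hL : L.Nonempty) (hR : R.Nonempty) (hF : #F ≤ f) :
    ImpRel E (C ∪ R) L ∨ ImpRel E (L ∪ C) R := by
  by_contra! h
  obtain ⟨hnL, hnR⟩ := h
  have hmem (j : V) : j ∈ F ∨ j ∈ L ∨ j ∈ C ∨ j ∈ R := by
    have := mem_univ j
    rw [← hcover] at this
    simpa only [mem_union, or_assoc] using this
  let x : V → ℝ := fun i => if i ∈ R then 1 else 0
  obtain ⟨exec, h0, hw⟩ := exists_middleExec E F x x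
  have hLow : ∀ t, ∀ i ∈ L, exec.state i t ≤ 0 :=
    exec.state_le_of_not_impRel hFL (A := C ∪ R)
      (fun j hjF hjL => by have := hmem j; simp only [mem_union]; tauto) hnL
      (fun t i hi j hj => by simp [hw t i j hj, x, disjoint_left.1 hLR hi])
      (fun i hi => by simp [h0, x, disjoint_left.1 hLR hi])
  have hHigh : ∀ t, ∀ i ∈ R, 1 ≤ exec.state i t :=
    exec.le_state_of_not_impRel hFR (A := L ∪ C)
      (fun j hjF hjR => by have := hmem j; simp only [mem_union]; tauto) hnR
      (fun t i hi j hj => by simp [hw t i j hj, x, hi])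
      (fun i hi => by simp [h0, x, hi])
  obtain ⟨l, hl⟩ := hL
  obtain ⟨r, hr⟩ := hR
  have hgap (t : ℕ) : 1 ≤ Umax exec t - muMin exec t := by
    linarith [hLow t l hl, hHigh t r hr, exec.state_le_Umax t (disjoint_right.1 hFR hr),
      exec.muMin_le_state t (disjoint_right.1 hFL hl)]
  linarith [ge_of_tendsto' (hcorrect F hF exec).2 hgap]

theorem three_mul_le_card_NinSet_of_middleCorrect {E : Finset (V × V)} {f : ℕ}
    (hloop : ∀ v : V, (v, v) ∉ E) (hcorrect : MiddleCorrect E f) {v : V}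
    (hv : (NinSet E v).Nonempty) : 3 * f ≤ #(NinSet E v) := by
  by_contra! hlt
  obtain ⟨F, hFN, hFcard⟩ := exists_subset_card_eq (min_le_right f #(NinSet E v))
  have hvF : v ∉ F := fun h => hloop v (by simpa [NinSet] using hFN h)
  obtain ⟨exec, h0, hw⟩ := exists_middleExec E F (fun _ => 1) (fun _ => 0)
  have hw1 (j : V) (hj : j ∈ NinSet E v) : exec.w 1 v j = if j ∈ F then 1 else 0 := by
    split_ifs with hjF
    · exact hw 0 v j hjF
    · rw [exec.w_honest 1 le_rfl v hvF j hj hjF, h0]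
  have hmany : F ⊆ {j ∈ NinSet E v | 0 < exec.w 1 v j} := fun j hj =>
    mem_filter.2 ⟨hFN hj, by rw [hw1 j (hFN hj), if_pos hj]; exact one_pos⟩
  have hpos : 0 < exec.state v 1 :=
    exec.state_succ_pos hvF (h0 v).ge (fun j hj => by rw [hw1 j hj]; split_ifs <;> norm_num)
      (lt_of_lt_of_le (by have := card_pos.2 hv; omega) (card_le_card hmany))
  have : Nonempty {i // i ∉ F} := ⟨⟨v, hvF⟩⟩
  have hU0 : Umax exec 0 ≤ 0 := exec.Umax_le 0 fun i _ => (h0 i).le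
  linarith [exec.state_le_Umax 1 hvF, ((hcorrect F (hFcard ▸ min_le_left _ _) exec).1 1 le_rfl).2]

theorem NinSet_nonempty_of_middleCorrect {E : Finset (V × V)} {f : ℕ}
    (hn : 2 ≤ Fintype.card V) (hloop : ∀ v : V, (v, v) ∉ E) (hcorrect : MiddleCorrect E f)
    (hf : 0 < f) (v : V) : (NinSet E v).Nonempty := by
  by_contra hv
  rw [not_nonempty_iff_eq_empty] at hv
  obtain ⟨u, hu⟩ := Fintype.exists_ne_of_one_lt_card hn v
  rcases impRel_or_impRel_of_middleCorrect hcorrect (F := ∅) (L := univ.erase v) (C := ∅)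
    (R := {v}) (by ext; simp) (disjoint_empty_left _) (disjoint_empty_left _)
    (by simp) ⟨u, mem_erase.2 ⟨hu, mem_univ u⟩⟩ (singleton_nonempty v) (by simp)
    with ⟨w, -, hlt⟩ | ⟨w, hw, hlt⟩
  · have hle : #(NinSet E w ∩ (∅ ∪ {v})) ≤ 1 := by
      simpa using card_le_card (inter_subset_right (s₁ := NinSet E w) (s₂ := {v}))
    have hvw : (NinSet E w ∩ (∅ ∪ {v})).Nonempty := card_pos.1 (by omega)
    have h3 := three_mul_le_card_NinSet_of_middleCorrect hloop hcorrect
      (hvw.mono inter_subset_left)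
    omega
  · rw [mem_singleton.1 hw, hv] at hlt
    simp at hlt

/-- necessity of the two conditions. -/
theorem necessary_condition
    (E : Finset (V × V)) (f : ℕ)
    (hn : 2 ≤ Fintype.card V)
    (hloop : ∀ v : V, (v, v) ∉ E)
    (hcorrect : MiddleCorrect E f) :
    (∀ v : V, 3 * f ≤ (NinSet E v).card) ∧
    (∀ F L C R : Finset V,
      F ∪ L ∪ C ∪ R = Finset.univ →
      Disjoint F L → Disjoint F C → Disjoint F R →
      Disjoint L C → Disjoint L R → Disjoint C R →
      L.Nonempty → R.Nonempty → F.card ≤ f →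
      ImpRel E (C ∪ R) L ∨ ImpRel E (L ∪ C) R) := by
  refine ⟨fun v => ?_, fun F L C R hcover hFL _ hFR _ hLR _ hL hR hF =>
    impRel_or_impRel_of_middleCorrect hcorrect hcover hFL hFR hLR hL hR hF⟩
  rcases Nat.eq_zero_or_pos f with rfl | hf
  · exact Nat.zero_le _
  · exact three_mul_le_card_NinSet_of_middleCorrect hloop hcorrect
      (NinSet_nonempty_of_middleCorrect hn hloop hcorrect hf v)
end

section
/- Suppose G(V,E) satisfies the sufficient condition for parameter f, and let F be the set of Byzantine faulty nodes with |F| ≤ f. Then in every execution of the Middle algorithm, for every t > 0: μ[t] ≥ μ[t−1] and U[t] ≤ U[t−1] (validity). -/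
open Finset Filter

variable {V : Type} [Fintype V] [DecidableEq V]

/-- validity of the Middle algorithm. -/
theorem middle_validity
    (E : Finset (V × V)) (f : ℕ)
    (hn : 2 ≤ Fintype.card V)
    (hloop : ∀ v : V, (v, v) ∉ E)
    (hsuff : SuffCond E f)
    (F : Finset V) (hF : F.card ≤ f)
    (exec : MiddleExec E F) :
    ∀ t : ℕ, 1 ≤ t →
      muMin exec (t - 1) ≤ muMin exec t ∧ Umax exec t ≤ Umax exec (t - 1) := by
  intro t ht
  by_cases hne : Nonempty {i : V // i ∉ F}
  swap
  · rw [not_nonempty_iff] at hne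
    constructor
    · rw [muMin, muMin, show (⨅ i : {i : V // i ∉ F}, exec.state i.1 (t-1)) = sInf ∅ from iSup_of_empty' (α := ℝᵒᵈ) _, show (⨅ i : {i : V // i ∉ F}, exec.state i.1 t) = sInf ∅ from iSup_of_empty' (α := ℝᵒᵈ) _]
    · rw [Umax, Umax, iSup_of_empty', iSup_of_empty']
  -- boundedness
  have hbddA : ∀ s : ℕ, BddAbove (Set.range fun i : {i : V // i ∉ F} => exec.state i.1 s) :=
    fun s => (Set.finite_range _).bddAbove
  have hbddB : ∀ s : ℕ, BddBelow (Set.range fun i : {i : V // i ∉ F} => exec.state i.1 s) :=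
    fun s => (Set.finite_range _).bddBelow
  -- key bounds on received values from M
  have key : ∀ i : V, i ∉ F →
      muMin exec (t - 1) ≤ exec.state i t ∧ exec.state i t ≤ Umax exec (t - 1) := by
    intro i hi
    set n := (NinSet E i).card with hn'
    have hfn : 3 * f ≤ n := hsuff.1 i
    have hfdiv : f ≤ n / 3 := Nat.le_div_iff_mul_le (by norm_num) |>.2 (by omega)
    have hBsub : exec.Bs t i ⊆ NinSet E i := by
      rw [← exec.part_union t ht i hi]; intro x hx
      exact Finset.mem_union_left _ (Finset.mem_union_left _ hx)
    have hTsub : exec.Ts t i ⊆ NinSet E i := by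
      rw [← exec.part_union t ht i hi]; intro x hx
      exact Finset.mem_union_left _ (Finset.mem_union_right _ hx)
    have hMsub : exec.Ms t i ⊆ NinSet E i := by
      rw [← exec.part_union t ht i hi]; intro x hx
      exact Finset.mem_union_right _ hx
    have hdisjBT := exec.disj_BT t ht i hi
    have hdisjBM := exec.disj_BM t ht i hi
    have hdisjTM := exec.disj_TM t ht i hi
    have hcardM : (exec.Ms t i).card = n - 2 * (n / 3) := by
      have h1 : Disjoint (exec.Bs t i ∪ exec.Ts t i) (exec.Ms t i) :=
        Finset.disjoint_union_left.2 ⟨hdisjBM, hdisjTM⟩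
      have h2 : (exec.Bs t i ∪ exec.Ts t i ∪ exec.Ms t i).card = n := by
        rw [exec.part_union t ht i hi]
      rw [Finset.card_union_of_disjoint h1, Finset.card_union_of_disjoint hdisjBT,
        exec.card_B t ht i hi, exec.card_T t ht i hi] at h2
      omega
    -- lower bound on each w from M
    have hwlow : ∀ j ∈ exec.Ms t i, muMin exec (t - 1) ≤ exec.w t i j := by
      intro j hj
      have hjB : j ∉ exec.Bs t i := fun h => (Finset.disjoint_left.1 hdisjBM h) hj
      have hcard : (insert j (exec.Bs t i)).card = n / 3 + 1 := by
        rw [Finset.card_insert_of_notMem hjB, exec.card_B t ht i hi]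
      have : ∃ k ∈ insert j (exec.Bs t i), k ∉ F := by
        by_contra hcon
        push_neg at hcon
        have hsub : insert j (exec.Bs t i) ⊆ F := hcon
        have := Finset.card_le_card hsub
        omega
      obtain ⟨k, hk, hkF⟩ := this
      have hkN : k ∈ NinSet E i := by
        rcases Finset.mem_insert.1 hk with h | h
        · exact h ▸ hMsub hj
        · exact hBsub h
      have hwk : exec.w t i k = exec.state k (t - 1) :=
        exec.w_honest t ht i hi k hkN hkF
      have hle : exec.w t i k ≤ exec.w t i j := by
        rcases Finset.mem_insert.1 hk with h | h
        · exact h ▸ le_refl _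
        · exact exec.le_BM t ht i hi k h j hj
      calc muMin exec (t - 1) ≤ exec.state k (t - 1) :=
            ciInf_le (hbddB _) (⟨k, hkF⟩ : {i : V // i ∉ F})
        _ = exec.w t i k := hwk.symm
        _ ≤ exec.w t i j := hle
    -- upper bound on each w from M
    have hwhigh : ∀ j ∈ exec.Ms t i, exec.w t i j ≤ Umax exec (t - 1) := by
      intro j hj
      have hjT : j ∉ exec.Ts t i := fun h => (Finset.disjoint_left.1 hdisjTM h) hj
      have hcard : (insert j (exec.Ts t i)).card = n / 3 + 1 := by
        rw [Finset.card_insert_of_notMem hjT, exec.card_T t ht i hi]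
      have : ∃ k ∈ insert j (exec.Ts t i), k ∉ F := by
        by_contra hcon
        push_neg at hcon
        have hsub : insert j (exec.Ts t i) ⊆ F := hcon
        have := Finset.card_le_card hsub
        omega
      obtain ⟨k, hk, hkF⟩ := this
      have hkN : k ∈ NinSet E i := by
        rcases Finset.mem_insert.1 hk with h | h
        · exact h ▸ hMsub hj
        · exact hTsub h
      have hwk : exec.w t i k = exec.state k (t - 1) :=
        exec.w_honest t ht i hi k hkN hkF
      have hle : exec.w t i j ≤ exec.w t i k := by
        rcases Finset.mem_insert.1 hk with h | h
        · exact h ▸ le_refl _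
        · exact exec.le_MT t ht i hi j hj k h
      calc exec.w t i j ≤ exec.w t i k := hle
        _ = exec.state k (t - 1) := hwk
        _ ≤ Umax exec (t - 1) := le_ciSup (hbddA _) (⟨k, hkF⟩ : {i : V // i ∉ F})
    -- the weight as a function of |M|
    set m := (exec.Ms t i).card with hm
    have hw_eq : middleWeight E i = ((m + 1 : ℕ) : ℝ)⁻¹ := by
      unfold middleWeight
      congr 1
      norm_cast
      omega
    have hupd := exec.update t ht i hi
    have hself_low : muMin exec (t - 1) ≤ exec.state i (t - 1) :=
      ciInf_le (hbddB _) (⟨i, hi⟩ : {i : V // i ∉ F})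
    have hself_high : exec.state i (t - 1) ≤ Umax exec (t - 1) :=
      le_ciSup (hbddA _) (⟨i, hi⟩ : {i : V // i ∉ F})
    have hsum_low : (m : ℝ) * muMin exec (t - 1) ≤ ∑ j ∈ exec.Ms t i, exec.w t i j := by
      have := Finset.card_nsmul_le_sum (exec.Ms t i) (fun j => exec.w t i j)
        (muMin exec (t - 1)) (fun j hj => hwlow j hj)
      simpa [nsmul_eq_mul] using this
    have hsum_high : (∑ j ∈ exec.Ms t i, exec.w t i j) ≤ (m : ℝ) * Umax exec (t - 1) := by
      have := Finset.sum_le_card_nsmul (exec.Ms t i) (fun j => exec.w t i j)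
        (Umax exec (t - 1)) (fun j hj => hwhigh j hj)
      simpa [nsmul_eq_mul] using this
    have hmpos : (0 : ℝ) < ((m + 1 : ℕ) : ℝ) := by positivity
    have hinv_nonneg : (0 : ℝ) ≤ ((m + 1 : ℕ) : ℝ)⁻¹ := by positivity
    constructor
    · rw [hupd, hw_eq]
      have h1 : ((m + 1 : ℕ) : ℝ) * muMin exec (t - 1) ≤
          exec.state i (t - 1) + ∑ j ∈ exec.Ms t i, exec.w t i j := by
        push_cast
        nlinarith [hself_low, hsum_low]
      calc muMin exec (t - 1)
          = ((m + 1 : ℕ) : ℝ)⁻¹ * (((m + 1 : ℕ) : ℝ) * muMin exec (t - 1)) := by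
            field_simp
        _ ≤ ((m + 1 : ℕ) : ℝ)⁻¹ * (exec.state i (t - 1) + ∑ j ∈ exec.Ms t i, exec.w t i j) :=
            mul_le_mul_of_nonneg_left h1 hinv_nonneg
    · rw [hupd, hw_eq]
      have h1 : exec.state i (t - 1) + ∑ j ∈ exec.Ms t i, exec.w t i j ≤
          ((m + 1 : ℕ) : ℝ) * Umax exec (t - 1) := by
        push_cast
        nlinarith [hself_high, hsum_high]
      calc ((m + 1 : ℕ) : ℝ)⁻¹ * (exec.state i (t - 1) + ∑ j ∈ exec.Ms t i, exec.w t i j)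
          ≤ ((m + 1 : ℕ) : ℝ)⁻¹ * (((m + 1 : ℕ) : ℝ) * Umax exec (t - 1)) :=
            mul_le_mul_of_nonneg_left h1 hinv_nonneg
        _ = Umax exec (t - 1) := by field_simp
  constructor
  · exact le_ciInf fun i => (key i.1 i.2).1
  · exact ciSup_le fun i => (key i.1 i.2).2
end

section
/- Assume G(V,E) satisfies the sufficient condition for parameter f. For any partition of V into sets A, B, F where A and B are both nonempty and |F| ≤ f, either A propagates to B, or B propagates to A. -/
open Finset Filter

variable {V : Type} [Fintype V] [DecidableEq V]

/-
A propagation from `A` that does not reach all of `B` gets stuck at a nonempty `B' ⊆ B` on which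
the nodes reached so far have no influence. If neither `A` propagates to `B` nor `B` to `A`, the
stuck sets `B' ⊆ B` and `A' ⊆ A`, together with `F` and the reached nodes
`C = (A \ A') ∪ (B \ B')`, form a partition `F, B', C, A'` violating the sufficient condition.
-/

section Propagation

variable {E : Finset (V × V)} {A B : Finset V}

theorem inRel_subset : inRel E A B ⊆ B :=
  filter_subset _ _

theorem impRel_iff_inRel_nonempty : ImpRel E A B ↔ (inRel E A B).Nonempty := by
  simp only [ImpRel, inRel, filter_nonempty_iff]

theorem propagatesIn_one (hB : B.Nonempty) (hall : inRel E A B = B) : PropagatesIn E A B 1 := by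
  refine ⟨one_pos, fun τ => if τ = 0 then A else A ∪ B, fun τ => if τ = 0 then B else ∅,
    rfl, rfl, rfl, rfl, fun τ hτ => ?_, fun τ hτ => ?_⟩ <;> obtain rfl : τ = 0 := by omega
  · exact hB.ne_empty
  · simp [hall, impRel_iff_inRel_nonempty, hB]

theorem PropagatesIn.cons {l : ℕ} (hB : B.Nonempty) (hAB : ImpRel E A B)
    (h : PropagatesIn E (A ∪ inRel E A B) (B \ inRel E A B) l) : PropagatesIn E A B (l + 1) := by
  obtain ⟨-, As, Bs, hA0, hB0, hAl, hBl, hne, hstep⟩ := h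
  refine ⟨l.succ_pos, fun τ => if τ = 0 then A else As (τ - 1),
    fun τ => if τ = 0 then B else Bs (τ - 1), rfl, rfl, ?_, hBl, fun τ hτ => ?_, fun τ hτ => ?_⟩
  · simp [hAl, union_assoc, union_sdiff_of_subset inRel_subset]
  · rcases τ with _ | τ
    · exact hB.ne_empty
    · exact hne τ (by omega)
  · rcases τ with _ | τ
    · simp [hAB, hA0, hB0]
    · simpa using hstep τ (by omega)

theorem propagates_or_exists_stuck (hB : B.Nonempty) :
    Propagates E A B ∨ ∃ B' ⊆ B, B'.Nonempty ∧ ¬ImpRel E (A ∪ (B \ B')) B' := by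
  induction B using Finset.strongInduction generalizing A with
  | _ B ih =>
    by_cases hAB : ImpRel E A B
    swap
    · exact Or.inr ⟨B, subset_rfl, hB, by simpa using hAB⟩
    set I := inRel E A B
    by_cases hrest : (B \ I).Nonempty
    swap
    · have hall : I = B := inRel_subset.antisymm (sdiff_eq_empty_iff_subset.1
        (not_nonempty_iff_eq_empty.1 hrest))
      exact Or.inl ⟨1, propagatesIn_one hB hall⟩
    have hsmaller : B \ I ⊂ B := sdiff_ssubset inRel_subset (impRel_iff_inRel_nonempty.1 hAB)
    rcases ih _ hsmaller hrest with ⟨l, hl⟩ | ⟨B', hB'sub, hB'ne, hstuck⟩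
    · exact Or.inl ⟨l + 1, hl.cons hB hAB⟩
    · refine Or.inr ⟨B', hB'sub.trans sdiff_subset, hB'ne, ?_⟩
      have hreached : A ∪ I ∪ ((B \ I) \ B') = A ∪ (B \ B') := by
        have hIB : I ⊆ B := inRel_subset
        rw [subset_iff] at hB'sub hIB
        ext x
        grind
      rwa [hreached] at hstuck

end Propagation

theorem SuffCond.impRel_or_impRel {E : Finset (V × V)} {f : ℕ} (hsuff : SuffCond E f)
    {A B F A' B' : Finset V} (huniv : A ∪ B ∪ F = univ) (hAB : Disjoint A B)
    (hAF : Disjoint A F) (hBF : Disjoint B F) (hF : F.card ≤ f)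
    (hA' : A' ⊆ A) (hB' : B' ⊆ B) (hA'ne : A'.Nonempty) (hB'ne : B'.Nonempty) :
    ImpRel E (A ∪ (B \ B')) B' ∨ ImpRel E (B ∪ (A \ A')) A' := by
  have hcover : ∀ x, x ∈ A ∨ x ∈ B ∨ x ∈ F := fun x => by
    simpa only [← huniv, Finset.mem_union, or_assoc] using mem_univ x
  rw [subset_iff] at hA' hB'
  rw [disjoint_left] at hAB hAF hBF
  have hreachedA : A \ A' ∪ B \ B' ∪ A' = A ∪ (B \ B') := by
    ext x; grind
  have hreachedB : B' ∪ (A \ A' ∪ B \ B') = B ∪ (A \ A') := by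
    ext x; grind
  rw [← hreachedA, ← hreachedB]
  refine hsuff.2 F B' (A \ A' ∪ B \ B') A' ?_ ?_ ?_ ?_ ?_ ?_ ?_ hB'ne hA'ne hF
  all_goals simp only [eq_univ_iff_forall, disjoint_left]; grind

theorem must_propagate_general
    (E : Finset (V × V)) (f : ℕ)
    (hsuff : SuffCond E f) :
    ∀ A B F : Finset V,
      A ∪ B ∪ F = Finset.univ →
      Disjoint A B → Disjoint A F → Disjoint B F →
      A.Nonempty → B.Nonempty → F.card ≤ f →
      Propagates E A B ∨ Propagates E B A := by
  intro A B F huniv hAB hAF hBF hA hB hF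
  rcases propagates_or_exists_stuck (E := E) (A := A) hB with hAB' | ⟨B', hB'B, hB'ne, hB'stuck⟩
  · exact Or.inl hAB'
  rcases propagates_or_exists_stuck (E := E) (A := B) hA with hBA' | ⟨A', hA'A, hA'ne, hA'stuck⟩
  · exact Or.inr hBA'
  rcases hsuff.impRel_or_impRel huniv hAB hAF hBF hF hA'A hB'B hA'ne hB'ne with h | h
  exacts [absurd h hB'stuck, absurd h hA'stuck]

/-- one of the two sets propagates to the other. -/
theorem must_propagate
    (E : Finset (V × V)) (f : ℕ)
    (hn : 2 ≤ Fintype.card V)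
    (hloop : ∀ v : V, (v, v) ∉ E)
    (hsuff : SuffCond E f) :
    ∀ A B F : Finset V,
      A ∪ B ∪ F = Finset.univ →
      Disjoint A B → Disjoint A F → Disjoint B F →
      A.Nonempty → B.Nonempty → F.card ≤ f →
      Propagates E A B ∨ Propagates E B A :=
  must_propagate_general E f hsuff
end

section
/- Suppose G(V,E) satisfies the sufficient condition for parameter f, and let F be the set of faulty nodes with |F| ≤ f. Consider an execution of the Middle algorithm, a fault-free node i ∈ V∖F, an iteration t ≥ 1 with middle set M at node i, and a real ψ with ψ ≤ μ[t−1]. Then for every j ∈ {i} ∪ M, v_i[t] − ψ ≥ a_i·(w_j[t,i] − ψ), where we set w_i[t,i] := v_i[t−1]. In particular, for every fault-free j ∈ {i} ∪ M, v_i[t] − ψ ≥ a_i·(v_j[t−1] − ψ). -/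
open Finset Filter

variable {V : Type} [Fintype V] [DecidableEq V]

section Average

variable {ι : Type*} {s : Finset ι} {x ψ : ℝ} {y : ι → ℝ}

theorem inv_card_add_one_mul_add_sum_sub :
    ((s.card + 1 : ℕ) : ℝ)⁻¹ * (x + ∑ j ∈ s, y j) - ψ =
      ((s.card + 1 : ℕ) : ℝ)⁻¹ * ((x - ψ) + ∑ j ∈ s, (y j - ψ)) := by
  rw [Finset.sum_sub_distrib, Finset.sum_const, nsmul_eq_mul]
  field_simp
  push_cast
  ring

theorem inv_card_add_one_mul_sub_le_left (hy : ∀ j ∈ s, ψ ≤ y j) :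
    ((s.card + 1 : ℕ) : ℝ)⁻¹ * (x - ψ) ≤
      ((s.card + 1 : ℕ) : ℝ)⁻¹ * (x + ∑ j ∈ s, y j) - ψ := by
  rw [inv_card_add_one_mul_add_sum_sub]
  gcongr
  exact le_add_of_nonneg_right (Finset.sum_nonneg fun j hj => sub_nonneg.mpr (hy j hj))

theorem inv_card_add_one_mul_sub_le_of_mem (hx : ψ ≤ x) (hy : ∀ j ∈ s, ψ ≤ y j)
    {k : ι} (hk : k ∈ s) :
    ((s.card + 1 : ℕ) : ℝ)⁻¹ * (y k - ψ) ≤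
      ((s.card + 1 : ℕ) : ℝ)⁻¹ * (x + ∑ j ∈ s, y j) - ψ := by
  rw [inv_card_add_one_mul_add_sum_sub]
  gcongr
  calc y k - ψ ≤ ∑ j ∈ s, (y j - ψ) :=
        Finset.single_le_sum (fun j hj => sub_nonneg.mpr (hy j hj)) hk
    _ ≤ (x - ψ) + ∑ j ∈ s, (y j - ψ) := le_add_of_nonneg_left (sub_nonneg.mpr hx)

end Average

namespace MiddleExec

variable {E : Finset (V × V)} {F : Finset V} (exec : MiddleExec E F) {t : ℕ} {i : V}

theorem le_state_of_le_muMin {s : ℕ} {ψ : ℝ} (hψ : ψ ≤ muMin exec s) {k : V} (hk : k ∉ F) :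
    ψ ≤ exec.state k s :=
  hψ.trans (ciInf_le (Finite.bddBelow_range _) (⟨k, hk⟩ : {k : V // k ∉ F}))

theorem Bs_subset (ht : 1 ≤ t) (hi : i ∉ F) : exec.Bs t i ⊆ NinSet E i := by
  rw [← exec.part_union t ht i hi, Finset.union_assoc]
  exact Finset.subset_union_left

theorem Ms_subset (ht : 1 ≤ t) (hi : i ∉ F) : exec.Ms t i ⊆ NinSet E i := by
  rw [← exec.part_union t ht i hi]
  exact Finset.subset_union_right

theorem card_Ms (ht : 1 ≤ t) (hi : i ∉ F) :
    (exec.Ms t i).card = (NinSet E i).card - 2 * ((NinSet E i).card / 3) := by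
  have hdisj : Disjoint (exec.Bs t i ∪ exec.Ts t i) (exec.Ms t i) :=
    Finset.disjoint_union_left.mpr ⟨exec.disj_BM t ht i hi, exec.disj_TM t ht i hi⟩
  have hcard : (NinSet E i).card =
      (exec.Bs t i).card + (exec.Ts t i).card + (exec.Ms t i).card := by
    rw [← exec.part_union t ht i hi, Finset.card_union_of_disjoint hdisj,
      Finset.card_union_of_disjoint (exec.disj_BT t ht i hi)]
  rw [exec.card_B t ht i hi, exec.card_T t ht i hi] at hcard
  omega

theorem middleWeight_eq (ht : 1 ≤ t) (hi : i ∉ F) :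
    middleWeight E i = (((exec.Ms t i).card + 1 : ℕ) : ℝ)⁻¹ := by
  rw [middleWeight, exec.card_Ms ht hi]

/-- Since `|B| ≥ f ≥ |F|`, the set `B ∪ {j}` contains a fault-free node, whose honest value
lies below `w_j`. -/
theorem exists_fault_free_le_w_of_mem_Ms {f : ℕ} (hf : 3 * f ≤ (NinSet E i).card)
    (hF : F.card ≤ f) (ht : 1 ≤ t) (hi : i ∉ F) {j : V} (hj : j ∈ exec.Ms t i) :
    ∃ k ∉ F, exec.state k (t - 1) ≤ exec.w t i j := by
  have hjB : j ∉ exec.Bs t i := Finset.disjoint_right.mp (exec.disj_BM t ht i hi) hj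
  have hcard : F.card < (insert j (exec.Bs t i)).card := by
    rw [Finset.card_insert_of_notMem hjB, exec.card_B t ht i hi]
    omega
  obtain ⟨k, hk, hkF⟩ := Finset.not_subset.mp fun h => (Finset.card_le_card h).not_gt hcard
  refine ⟨k, hkF, ?_⟩
  rcases Finset.mem_insert.mp hk with rfl | hkB
  · rw [exec.w_honest t ht i hi k (exec.Ms_subset ht hi hj) hkF]
  · rw [← exec.w_honest t ht i hi k (exec.Bs_subset ht hi hkB) hkF]
    exact exec.le_BM t ht i hi k hkB j hj

end MiddleExec

theorem lower_bound_lemma_general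
    (E : Finset (V × V)) (f : ℕ)
    (hsuff : SuffCond E f)
    (F : Finset V) (hF : F.card ≤ f)
    (exec : MiddleExec E F)
    (i : V) (hi : i ∉ F)
    (t : ℕ) (ht : 1 ≤ t)
    (ψ : ℝ) (hψ : ψ ≤ muMin exec (t - 1)) :
    (∀ j ∈ insert i (exec.Ms t i),
      exec.state i t - ψ ≥
        middleWeight E i * ((if j = i then exec.state i (t - 1) else exec.w t i j) - ψ)) ∧
    (∀ j ∈ insert i (exec.Ms t i), j ∉ F →
      exec.state i t - ψ ≥ middleWeight E i * (exec.state j (t - 1) - ψ)) := by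
  have hself : ψ ≤ exec.state i (t - 1) := exec.le_state_of_le_muMin hψ hi
  have hmiddle : ∀ j ∈ exec.Ms t i, ψ ≤ exec.w t i j := fun j hj => by
    obtain ⟨k, hkF, hk⟩ := exec.exists_fault_free_le_w_of_mem_Ms (hsuff.1 i) hF ht hi hj
    exact (exec.le_state_of_le_muMin hψ hkF).trans hk
  have main : ∀ j ∈ insert i (exec.Ms t i),
      exec.state i t - ψ ≥
        middleWeight E i * ((if j = i then exec.state i (t - 1) else exec.w t i j) - ψ) := by
    intro j hj
    rw [exec.update t ht i hi, exec.middleWeight_eq ht hi]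
    split_ifs with hji
    · exact inv_card_add_one_mul_sub_le_left hmiddle
    · exact inv_card_add_one_mul_sub_le_of_mem hself hmiddle
        ((Finset.mem_insert.mp hj).resolve_left hji)
  refine ⟨main, fun j hj hjF => ?_⟩
  have hj' := main j hj
  split_ifs at hj' with hji
  · exact hji ▸ hj'
  · rwa [exec.w_honest t ht i hi j
      (exec.Ms_subset ht hi ((Finset.mem_insert.mp hj).resolve_left hji)) hjF] at hj'

/-- lower-bound lemma on `v_i[t] - ψ`. -/
theorem lower_bound_lemma
    (E : Finset (V × V)) (f : ℕ)
    (hn : 2 ≤ Fintype.card V)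
    (hloop : ∀ v : V, (v, v) ∉ E)
    (hsuff : SuffCond E f)
    (F : Finset V) (hF : F.card ≤ f)
    (exec : MiddleExec E F)
    (i : V) (hi : i ∉ F)
    (t : ℕ) (ht : 1 ≤ t)
    (ψ : ℝ) (hψ : ψ ≤ muMin exec (t - 1)) :
    (∀ j ∈ insert i (exec.Ms t i),
      exec.state i t - ψ ≥
        middleWeight E i * ((if j = i then exec.state i (t - 1) else exec.w t i j) - ψ)) ∧
    (∀ j ∈ insert i (exec.Ms t i), j ∉ F →
      exec.state i t - ψ ≥ middleWeight E i * (exec.state j (t - 1) - ψ)) :=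
  lower_bound_lemma_general E f hsuff F hF exec i hi t ht ψ hψ
end

section
/- Suppose G(V,E) satisfies the sufficient condition for parameter f, F is the set of faulty nodes with |F| ≤ f, and consider an execution of the Middle algorithm. Suppose at the end of iteration s the fault-free nodes V∖F are partitioned into nonempty sets R and L such that R propagates to L in l steps, with propagating sequences R_0,…,R_l and L_0,…,L_l (so R_0 = R, L_0 = L, R_l = V∖F, L_l = ∅). Let x = min_{j∈R} v_j[s]. Then for every 0 ≤ τ ≤ l and every node i ∈ R_τ: v_i[s+τ] − μ[s] ≥ α^τ·(x − μ[s]). -/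
open Finset Filter

variable {V : Type} [Fintype V] [DecidableEq V]

/-- Claim 1, lower bound along the propagating sequence. -/
theorem claim_propagating_lower_bound
    (E : Finset (V × V)) (f : ℕ)
    (hn : 2 ≤ Fintype.card V)
    (hloop : ∀ v : V, (v, v) ∉ E)
    (hsuff : SuffCond E f)
    (F : Finset V) (hF : F.card ≤ f)
    (exec : MiddleExec E F)
    (s l : ℕ) (R L : Finset V)
    (hpart : R ∪ L = Finset.univ \ F) (hdisj : Disjoint R L)
    (hRne : R.Nonempty) (hLne : L.Nonempty)
    (hl : 0 < l)
    (Rs Ls : ℕ → Finset V)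
    (hR0 : Rs 0 = R) (hL0 : Ls 0 = L)
    (hRl : Rs l = R ∪ L) (hLl : Ls l = ∅)
    (hLne' : ∀ τ < l, Ls τ ≠ ∅)
    (hstep : ∀ τ < l, ImpRel E (Rs τ) (Ls τ) ∧
      Rs (τ + 1) = Rs τ ∪ inRel E (Rs τ) (Ls τ) ∧
      Ls (τ + 1) = Ls τ \ inRel E (Rs τ) (Ls τ)) :
    ∀ τ ≤ l, ∀ i ∈ Rs τ,
      exec.state i (s + τ) - muMin exec s ≥
        alphaMin E ^ τ * ((⨅ j : {j : V // j ∈ R}, exec.state j.1 s) - muMin exec s) := by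
  -- Preliminaries
  classical
  have hVne : Nonempty V := Fintype.card_pos_iff.mp (by omega)
  have hFfree : ∀ j ∈ R ∪ L, j ∉ F := by
    intro j hj
    rw [hpart] at hj
    exact (Finset.mem_sdiff.mp hj).2
  obtain ⟨r0, hr0⟩ := hRne
  have hNF : Nonempty {i : V // i ∉ F} :=
    ⟨⟨r0, hFfree r0 (Finset.mem_union_left _ hr0)⟩⟩
  have hNR : Nonempty {j : V // j ∈ R} := ⟨⟨r0, hr0⟩⟩
  set m0 : ℝ := muMin exec s with hm0def
  set x : ℝ := ⨅ j : {j : V // j ∈ R}, exec.state j.1 s with hxdef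
  have hmu_le : ∀ j, j ∉ F → m0 ≤ exec.state j s := by
    intro j hj
    exact ciInf_le (Set.finite_range fun i : {i : V // i ∉ F} => exec.state i.1 s).bddBelow
      (⟨j, hj⟩ : {i : V // i ∉ F})
  have hx_le : ∀ j ∈ R, x ≤ exec.state j s := by
    intro j hj
    exact ciInf_le (Set.finite_range fun i : {j : V // j ∈ R} => exec.state i.1 s).bddBelow
      (⟨j, hj⟩ : {j : V // j ∈ R})
  have hmu_le_x : m0 ≤ x :=
    le_ciInf fun j => hmu_le j.1 (hFfree j.1 (Finset.mem_union_left _ j.2))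
  -- weights
  have hapos : ∀ i : V, 0 < middleWeight E i := by
    intro i
    exact inv_pos.mpr (by exact_mod_cast Nat.succ_pos _)
  have hαle : ∀ i : V, alphaMin E ≤ middleWeight E i := by
    intro i
    exact ciInf_le (Set.finite_range _).bddBelow i
  have hαpos : 0 < alphaMin E := by
    have hb : ∀ i : V, ((Fintype.card V + 1 : ℕ) : ℝ)⁻¹ ≤ middleWeight E i := by
      intro i
      apply inv_anti₀
      · exact_mod_cast Nat.succ_pos _
      · have h1 : (NinSet E i).card ≤ Fintype.card V := Finset.card_le_univ _
        exact_mod_cast by omega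
    have h2 : ((Fintype.card V + 1 : ℕ) : ℝ)⁻¹ ≤ alphaMin E := le_ciInf hb
    have hp : (0:ℝ) < ((Fintype.card V + 1 : ℕ) : ℝ)⁻¹ :=
      inv_pos.mpr (by exact_mod_cast Nat.succ_pos _)
    linarith
  -- card of Ms
  have hcardM : ∀ t, 1 ≤ t → ∀ i, i ∉ F →
      (exec.Ms t i).card = (NinSet E i).card - 2 * ((NinSet E i).card / 3) := by
    intro t ht i hi
    have hu := exec.part_union t ht i hi
    have hd1 : Disjoint (exec.Bs t i ∪ exec.Ts t i) (exec.Ms t i) :=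
      Finset.disjoint_union_left.mpr ⟨exec.disj_BM t ht i hi, exec.disj_TM t ht i hi⟩
    have h1 : (exec.Bs t i ∪ exec.Ts t i ∪ exec.Ms t i).card
        = (exec.Bs t i).card + (exec.Ts t i).card + (exec.Ms t i).card := by
      rw [Finset.card_union_of_disjoint hd1,
        Finset.card_union_of_disjoint (exec.disj_BT t ht i hi)]
    rw [hu] at h1
    rw [exec.card_B t ht i hi, exec.card_T t ht i hi] at h1
    omega
  have hid : ∀ t, 1 ≤ t → ∀ i, i ∉ F →
      middleWeight E i * (((exec.Ms t i).card : ℝ) + 1) = 1 := by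
    intro t ht i hi
    have hc := hcardM t ht i hi
    have hcast : (((exec.Ms t i).card : ℝ) + 1)
        = (((NinSet E i).card - 2 * ((NinSet E i).card / 3) + 1 : ℕ) : ℝ) := by
      rw [hc]; push_cast; ring
    rw [hcast,
      show middleWeight E i
        = ((((NinSet E i).card - 2 * ((NinSet E i).card / 3) + 1 : ℕ)) : ℝ)⁻¹ from rfl]
    exact inv_mul_cancel₀ (Nat.cast_ne_zero.mpr (by omega))
  -- membership in NinSet
  have hMsub : ∀ t, 1 ≤ t → ∀ i, i ∉ F → exec.Ms t i ⊆ NinSet E i := by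
    intro t ht i hi
    rw [← exec.part_union t ht i hi]
    exact Finset.subset_union_right
  have hBsub : ∀ t, 1 ≤ t → ∀ i, i ∉ F → exec.Bs t i ⊆ NinSet E i := by
    intro t ht i hi
    rw [← exec.part_union t ht i hi]
    exact (Finset.subset_union_left).trans Finset.subset_union_left
  -- lower bound on received values in M
  have hw_ge : ∀ t : ℕ, (∀ j, j ∉ F → m0 ≤ exec.state j t) → ∀ i, i ∉ F →
      ∀ k ∈ exec.Ms (t+1) i, m0 ≤ exec.w (t+1) i k := by
    intro t hall i hi k hk
    have ht1 : 1 ≤ t + 1 := Nat.le_add_left 1 t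
    by_cases hkF : k ∈ F
    · have hgood : ∃ b ∈ exec.Bs (t+1) i, b ∉ F := by
        by_contra h
        push_neg at h
        have hsubF : exec.Bs (t+1) i ⊆ F := fun b hb => h b hb
        have hcard : (exec.Bs (t+1) i).card = (NinSet E i).card / 3 :=
          exec.card_B (t+1) ht1 i hi
        have h3f := hsuff.1 i
        have heq : exec.Bs (t+1) i = F :=
          Finset.eq_of_subset_of_card_le hsubF (by omega)
        have hkB : k ∈ exec.Bs (t+1) i := by rw [heq]; exact hkF
        exact Finset.disjoint_left.mp (exec.disj_BM (t+1) ht1 i hi) hkB hk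
      obtain ⟨b, hb, hbF⟩ := hgood
      have hw := exec.w_honest (t+1) ht1 i hi b (hBsub (t+1) ht1 i hi hb) hbF
      have hle := exec.le_BM (t+1) ht1 i hi b hb k hk
      have : m0 ≤ exec.w (t+1) i b := by
        rw [hw]; exact hall b hbF
      linarith
    · have hw := exec.w_honest (t+1) ht1 i hi k (hMsub (t+1) ht1 i hi hk) hkF
      rw [hw]
      exact hall k hkF
  -- all fault-free states stay above m0
  have hstate_ge : ∀ τ : ℕ, ∀ i, i ∉ F → m0 ≤ exec.state i (s + τ) := by
    intro τ
    induction τ with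
    | zero => exact fun i hi => hmu_le i hi
    | succ τ ih =>
      intro i hi
      have ht1 : 1 ≤ s + τ + 1 := Nat.le_add_left 1 _
      have hupd := exec.update (s + τ + 1) ht1 i hi
      have hMle := hw_ge (s + τ) ih i hi
      have hsum : ((exec.Ms (s+τ+1) i).card : ℝ) * m0
          ≤ ∑ j ∈ exec.Ms (s+τ+1) i, exec.w (s+τ+1) i j := by
        have := Finset.card_nsmul_le_sum (exec.Ms (s+τ+1) i)
          (fun j => exec.w (s+τ+1) i j) m0 (fun j hj => hMle j hj)
        simpa [nsmul_eq_mul] using this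
      have hid' := hid (s+τ+1) ht1 i hi
      have h1 : m0 + ((exec.Ms (s+τ+1) i).card : ℝ) * m0
          ≤ exec.state i (s + τ) + ∑ j ∈ exec.Ms (s+τ+1) i, exec.w (s+τ+1) i j :=
        add_le_add (ih i hi) hsum
      have h2 := mul_le_mul_of_nonneg_left h1 (le_of_lt (hapos i))
      have h3 : middleWeight E i * (m0 + ((exec.Ms (s+τ+1) i).card : ℝ) * m0) = m0 := by
        linear_combination m0 * hid'
      show m0 ≤ exec.state i (s + τ + 1)
      rw [hupd]
      have hsub : s + τ + 1 - 1 = s + τ := rfl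
      rw [hsub]
      linarith
  -- the sets Rs τ ∪ Ls τ are invariant
  have hRL : ∀ τ, τ ≤ l → Rs τ ∪ Ls τ = R ∪ L := by
    intro τ
    induction τ with
    | zero => intro _; rw [hR0, hL0]
    | succ τ ih =>
      intro h
      have hτl : τ < l := h
      obtain ⟨_, hRs, hLs⟩ := hstep τ hτl
      rw [hRs, hLs, ← ih (le_of_lt hτl)]
      have hin : inRel E (Rs τ) (Ls τ) ⊆ Ls τ := Finset.filter_subset _ _
      ext v
      have hv := @hin v
      simp only [Finset.mem_union, Finset.mem_sdiff, Finset.mem_filter] at *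
      tauto
  -- main induction
  intro τ
  induction τ with
  | zero =>
    intro _ i hi
    rw [hR0] at hi
    have h1 := hx_le i hi
    simpa using h1
  | succ τ ih =>
    intro hτ i hi
    have hτl : τ < l := hτ
    obtain ⟨_, hRs, hLs⟩ := hstep τ hτl
    have hiF : i ∉ F := by
      apply hFfree
      rw [← hRL (τ+1) hτ]
      exact Finset.mem_union_left _ hi
    have ht1 : 1 ≤ s + τ + 1 := Nat.le_add_left 1 _
    set t := s + τ with htdef
    set c' : ℝ := alphaMin E ^ τ * (x - m0) with hc'def
    have hc'nn : 0 ≤ c' := mul_nonneg (pow_nonneg (le_of_lt hαpos) τ) (by linarith)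
    have hMle := hw_ge t (fun j hj => hstate_ge τ j hj) i hiF
    -- key bound on state + sum
    have hkey : (((exec.Ms (t+1) i).card : ℝ) + 1) * m0 + c'
        ≤ exec.state i t + ∑ j ∈ exec.Ms (t+1) i, exec.w (t+1) i j := by
      have hsum0 : ∀ S : Finset V, S ⊆ exec.Ms (t+1) i →
          (S.card : ℝ) * m0 ≤ ∑ j ∈ S, exec.w (t+1) i j := by
        intro S hS
        have := Finset.card_nsmul_le_sum S (fun j => exec.w (t+1) i j) m0
          (fun j hj => hMle j (hS hj))
        simpa [nsmul_eq_mul] using this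
      rw [hRs] at hi
      rcases Finset.mem_union.mp hi with hiR | hiIn
      · -- i was already in Rs τ
        have hIH := ih (le_of_lt hτl) i hiR
        have hs := hsum0 _ (Finset.Subset.refl _)
        have : m0 + c' ≤ exec.state i t := by
          simp only [ge_iff_le] at hIH
          linarith
        linarith
      · -- i is in the in-set
        have hmem := Finset.mem_filter.mp hiIn
        have hcard : (NinSet E i).card < 3 * ((NinSet E i) ∩ Rs τ).card := hmem.2
        have hn1 : 1 ≤ (NinSet E i).card := by
          by_contra h
          push_neg at h
          interval_cases h' : (NinSet E i).card
          · have : (NinSet E i) ∩ Rs τ ⊆ NinSet E i := Finset.inter_subset_left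
            have := Finset.card_le_card this
            omega
        have hM1 : 1 ≤ (exec.Ms (t+1) i).card := by
          have := hcardM (t+1) ht1 i hiF
          omega
        -- find j ∈ N ∩ Rs τ outside T
        have hjex : ∃ j ∈ (NinSet E i) ∩ Rs τ, j ∉ exec.Ts (t+1) i := by
          by_contra h
          push_neg at h
          have hsubT : (NinSet E i) ∩ Rs τ ⊆ exec.Ts (t+1) i := fun j hj => h j hj
          have := Finset.card_le_card hsubT
          rw [exec.card_T (t+1) ht1 i hiF] at this
          omega
        obtain ⟨j, hjNR, hjT⟩ := hjex
        obtain ⟨hjN, hjR⟩ := Finset.mem_inter.mp hjNR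
        have hjF : j ∉ F := by
          apply hFfree
          rw [← hRL τ (le_of_lt hτl)]
          exact Finset.mem_union_left _ hjR
        have hjBM : j ∈ exec.Bs (t+1) i ∪ exec.Ms (t+1) i := by
          have : j ∈ exec.Bs (t+1) i ∪ exec.Ts (t+1) i ∪ exec.Ms (t+1) i := by
            rw [exec.part_union (t+1) ht1 i hiF]; exact hjN
          rcases Finset.mem_union.mp this with h' | h'
          · rcases Finset.mem_union.mp h' with h'' | h''
            · exact Finset.mem_union_left _ h''
            · exact absurd h'' hjT
          · exact Finset.mem_union_right _ h'
        have hwj : exec.w (t+1) i j = exec.state j t :=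
          exec.w_honest (t+1) ht1 i hiF j hjN hjF
        have hIHj : m0 + c' ≤ exec.state j t := by
          have := ih (le_of_lt hτl) j hjR
          simp only [ge_iff_le] at this
          linarith
        have hstatei : m0 ≤ exec.state i t := hstate_ge τ i hiF
        rcases Finset.mem_union.mp hjBM with hjB | hjM
        · -- j ∈ B : every value in M dominates state j t
          have hall : ∀ k ∈ exec.Ms (t+1) i, m0 + c' ≤ exec.w (t+1) i k := by
            intro k hk
            have := exec.le_BM (t+1) ht1 i hiF j hjB k hk
            rw [hwj] at this
            linarith
          have hsum : ((exec.Ms (t+1) i).card : ℝ) * m0 + ((exec.Ms (t+1) i).card : ℝ) * c'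
              ≤ ∑ k ∈ exec.Ms (t+1) i, exec.w (t+1) i k := by
            have := Finset.card_nsmul_le_sum (exec.Ms (t+1) i)
              (fun k => exec.w (t+1) i k) (m0 + c') hall
            simpa [nsmul_eq_mul] using this
          have hMc : (1:ℝ) ≤ ((exec.Ms (t+1) i).card : ℝ) := by exact_mod_cast hM1
          nlinarith
        · -- j ∈ M : split off the term for j
          have hsplit : ∑ k ∈ (exec.Ms (t+1) i).erase j, exec.w (t+1) i k
                + exec.w (t+1) i j
              = ∑ k ∈ exec.Ms (t+1) i, exec.w (t+1) i k :=
            Finset.sum_erase_add _ _ hjM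
          have hrest : (((exec.Ms (t+1) i).erase j).card : ℝ) * m0
              ≤ ∑ k ∈ (exec.Ms (t+1) i).erase j, exec.w (t+1) i k := by
            have := Finset.card_nsmul_le_sum ((exec.Ms (t+1) i).erase j)
              (fun k => exec.w (t+1) i k) m0
              (fun k hk => hMle k (Finset.mem_of_mem_erase hk))
            simpa [nsmul_eq_mul] using this
          have hec : (((exec.Ms (t+1) i).erase j).card : ℝ)
              = ((exec.Ms (t+1) i).card : ℝ) - 1 := by
            rw [Finset.card_erase_of_mem hjM]
            have : 1 ≤ (exec.Ms (t+1) i).card := Finset.card_pos.mpr ⟨j, hjM⟩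
            push_cast [Nat.cast_sub this]
            ring
          rw [hec] at hrest
          rw [hwj] at hsplit
          linarith
    -- finish
    have hid' := hid (t+1) ht1 i hiF
    have h2 := mul_le_mul_of_nonneg_left hkey (le_of_lt (hapos i))
    have h3 : middleWeight E i * ((((exec.Ms (t+1) i).card : ℝ) + 1) * m0 + c')
        = m0 + middleWeight E i * c' := by
      linear_combination m0 * hid'
    have h4 : alphaMin E * c' ≤ middleWeight E i * c' :=
      mul_le_mul_of_nonneg_right (hαle i) hc'nn
    have h5 : alphaMin E ^ (τ+1) * (x - m0) = alphaMin E * c' := by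
      rw [hc'def, pow_succ]; ring
    have hupd := exec.update (t+1) ht1 i hiF
    have hsub : t + 1 - 1 = t := rfl
    rw [hsub] at hupd
    show exec.state i (t + 1) - m0 ≥ alphaMin E ^ (τ+1) * (x - m0)
    rw [hupd, h5]
    linarith
end
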